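/- Let Λ* be a full-rank lattice in ℝ^d with d ≥ 2, and let M > 0, a > 1. Then the double sum over lattice points w' ∈ Λ* with M/2 < |w'| < M and w ∈ Λ* with M + a ≤ |w| < 2M of |w - w'|^{-(d+1)} is bounded above by C · M^{d-1} · log((a + M/2)/a) for a constant C depending only on the lattice and d. -/

import Mathlib

/-!
The lattice is uniformly discrete, so a volume-packing argument bounds the number of its points in
a shell `R ≤ ‖w - c‖ ≤ R + 1` by `≪ (R + 1)^(d-1)`; summing over shells gives the tail estimate
`∑_{‖w - c‖ ≥ t} ‖w - c‖^(-(d+1)) ≪ 1/t`. Put `k(w') = ⌊M - ‖w'‖⌋ ≤ M/2`. Every `w` with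
`‖w‖ ≥ M + a` has `‖w - w'‖ ≥ a + k(w')`, so the inner sum is `≪ 1/(a + k(w'))`, while the shell
count gives `≪ M^(d-1)` points `w'` with `k(w') = k`. Finally, as `M > a > 1`,
`∑_{k ≤ M/2} 1/(a + k) ≪ log((a + M/2)/a)`.
-/

open MeasureTheory

noncomputable section

/-- The lattice point of the full-rank lattice `B ℤ^d` corresponding to `m ∈ ℤ^d`. -/
def latticePoint {d : ℕ} (B : Matrix (Fin d) (Fin d) ℝ) (m : Fin d → ℤ) :
    EuclideanSpace ℝ (Fin d) :=
  WithLp.toLp 2 (fun i => ∑ j, B i j * (m j : ℝ))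

open Metric Module Finset

theorem sum_le_sum_range_mul_of_card_fiber_le {ι : Type*} {S : Finset ι} {κ : ι → ℕ} {N : ℕ}
    {F : ι → ℝ} {b g : ℕ → ℝ} (hκ : ∀ i ∈ S, κ i < N) (hF : ∀ i ∈ S, F i ≤ g (κ i))
    (hg : ∀ k < N, 0 ≤ g k) (hb : ∀ k < N, (#{i ∈ S | κ i = k} : ℝ) ≤ b k) :
    ∑ i ∈ S, F i ≤ ∑ k ∈ range N, b k * g k := by
  rw [← sum_fiberwise_of_maps_to fun i hi => mem_range.2 (hκ i hi)]
  refine sum_le_sum fun k hk => ?_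
  rw [mem_range] at hk
  calc ∑ i ∈ S with κ i = k, F i ≤ ∑ i ∈ S with κ i = k, g k :=
        sum_le_sum fun i hi => (mem_filter.1 hi).2 ▸ hF i (mem_filter.1 hi).1
    _ = #{i ∈ S | κ i = k} * g k := by rw [sum_const, nsmul_eq_mul]
    _ ≤ b k * g k := mul_le_mul_of_nonneg_right (hb k hk) (hg k hk)

theorem sum_range_inv_add_sq_le {t : ℝ} (ht : 1 ≤ t) (N : ℕ) :
    ∑ k ∈ range N, ((t + k) ^ 2)⁻¹ ≤ 2 / t := by
  have hterm (x : ℝ) (hx : 1 ≤ x) : (x ^ 2)⁻¹ ≤ 2 * (x⁻¹ - (x + 1)⁻¹) := by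
    have hx0 : 0 < x := by linarith
    rw [← sub_nonneg]
    have key : 2 * (x⁻¹ - (x + 1)⁻¹) - (x ^ 2)⁻¹ = (x - 1) / (x ^ 2 * (x + 1)) := by
      field_simp; ring
    rw [key]
    exact div_nonneg (by linarith) (by positivity)
  calc ∑ k ∈ range N, ((t + k) ^ 2)⁻¹
      ≤ ∑ k ∈ range N, 2 * ((t + k)⁻¹ - (t + (k + 1 : ℕ))⁻¹) := by
        refine sum_le_sum fun k _ => ?_
        rw [Nat.cast_succ, ← add_assoc]
        exact hterm _ (le_add_of_le_of_nonneg ht k.cast_nonneg)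
    _ = 2 * (t⁻¹ - (t + N)⁻¹) := by
      rw [← mul_sum, sum_range_sub' fun k : ℕ => (t + k)⁻¹, Nat.cast_zero, add_zero]
    _ ≤ 2 / t := by
      have : 0 < (t + N)⁻¹ := by positivity
      rw [div_eq_mul_inv]
      linarith

theorem sum_range_inv_add_le_two_mul_log {a : ℝ} (ha : 1 ≤ a) (N : ℕ) :
    ∑ k ∈ range N, (a + k)⁻¹ ≤ 2 * Real.log ((a + N) / a) := by
  have hterm (x : ℝ) (hx : 1 ≤ x) : x⁻¹ ≤ 2 * Real.log ((x + 1) / x) := by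
    have hx0 : 0 < x := by linarith
    have hlog := Real.one_sub_inv_le_log_of_pos (x := (x + 1) / x) (by positivity)
    have key : 1 - ((x + 1) / x)⁻¹ = (x + 1)⁻¹ := by field_simp; ring
    have : x⁻¹ ≤ 2 * (x + 1)⁻¹ := by
      rw [← div_eq_mul_inv, inv_le_iff_one_le_mul₀ hx0, div_mul_eq_mul_div,
        le_div_iff₀ (by linarith)]
      linarith
    linarith
  calc ∑ k ∈ range N, (a + k)⁻¹
      ≤ ∑ k ∈ range N, 2 * (Real.log (a + (k + 1 : ℕ)) - Real.log (a + k)) := by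
        refine sum_le_sum fun k _ => ?_
        have hx : 1 ≤ a + k := le_add_of_le_of_nonneg ha k.cast_nonneg
        rw [← Real.log_div (by positivity) (by positivity), Nat.cast_succ, ← add_assoc]
        exact hterm _ hx
    _ = 2 * Real.log ((a + N) / a) := by
      rw [← mul_sum, sum_range_sub fun k : ℕ => Real.log (a + k), Nat.cast_zero, add_zero,
        Real.log_div (by positivity) (by positivity)]

theorem sum_le_sum_image_fst_sum_image_snd {α β : Type*} [DecidableEq α] [DecidableEq β]
    (S : Finset (α × β)) {F : α → β → ℝ} (hF : ∀ x y, 0 ≤ F x y) :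
    ∑ q ∈ S, F q.1 q.2 ≤ ∑ x ∈ S.image Prod.fst, ∑ y ∈ S.image Prod.snd, F x y := by
  rw [← sum_product']
  exact sum_le_sum_of_subset_of_nonneg subset_product fun _ _ _ => hF _ _

section SeparatedFamily

variable {E : Type*} [NormedAddCommGroup E] [NormedSpace ℝ E] [FiniteDimensional ℝ E]
  [Nontrivial E] {ι : Type*}

theorem card_mul_pow_add_pow_le_pow {f : ι → E} {S : Finset ι} {ρ : ℝ} (hρ : 0 < ρ)
    (hdisj : (S : Set ι).PairwiseDisjoint fun i => ball (f i) ρ) {c : E} {x y : ℝ}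
    (hy : 0 ≤ y) (hyx : y ≤ x) (hS : ∀ i ∈ S, ball (f i) ρ ⊆ closedBall c x \ ball c y) :
    #S * ρ ^ finrank ℝ E + y ^ finrank ℝ E ≤ x ^ finrank ℝ E := by
  borelize E
  set μ : Measure E := Measure.addHaar
  have hV : μ (ball 0 1) ≠ 0 := (measure_ball_pos μ 0 one_pos).ne'
  have hV' : μ (ball 0 1) ≠ ⊤ := measure_ball_lt_top.ne
  have hdisj' : Disjoint (⋃ i ∈ S, ball (f i) ρ) (ball c y) :=
    Set.disjoint_iUnion₂_left.2 fun i hi =>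
      Set.disjoint_of_subset_left (hS i hi) Set.disjoint_sdiff_left
  have hsub : (⋃ i ∈ S, ball (f i) ρ) ∪ ball c y ⊆ closedBall c x :=
    Set.union_subset (Set.iUnion₂_subset fun i hi => (hS i hi).trans Set.sdiff_subset)
      (ball_subset_closedBall.trans (closedBall_subset_closedBall hyx))
  have hvol := measure_mono (μ := μ) hsub
  rw [measure_union hdisj' measurableSet_ball,
    measure_biUnion_finset hdisj fun _ _ => measurableSet_ball,
    Measure.addHaar_closedBall μ c (hy.trans hyx), Measure.addHaar_ball μ c hy] at hvol
  simp_rw [Measure.addHaar_ball μ _ hρ.le] at hvol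
  rwa [sum_const, nsmul_eq_mul, ← mul_assoc, ← add_mul, ENNReal.mul_le_mul_iff_left hV hV',
    ← ENNReal.ofReal_natCast, ← ENNReal.ofReal_mul (by positivity),
    ← ENNReal.ofReal_add (by positivity) (by positivity),
    ENNReal.ofReal_le_ofReal_iff (pow_nonneg (hy.trans hyx) _)] at hvol

theorem exists_card_le_mul_pow_of_mem_shell {f : ι → E} {r : ℝ} (hr : 0 < r)
    (hf : Pairwise fun i j => r ≤ ‖f i - f j‖) :
    ∃ K > 0, ∀ (c : E) (R : ℝ), 0 ≤ R → ∀ S : Finset ι,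
      (∀ i ∈ S, R ≤ ‖f i - c‖ ∧ ‖f i - c‖ ≤ R + 1) →
      (#S : ℝ) ≤ K * (R + 1) ^ (finrank ℝ E - 1) := by
  set n := finrank ℝ E
  have hn : 0 < n := finrank_pos
  set ρ := r / 2 with hρr
  have hρ : 0 < ρ := by positivity
  refine ⟨(1 + 2 * ρ) * n * (1 + ρ) ^ (n - 1) / ρ ^ n, by positivity, fun c R hR S hS => ?_⟩
  set x := R + 1 + ρ
  set y := max (R - ρ) 0
  have hdisj : (S : Set ι).PairwiseDisjoint fun i => ball (f i) ρ := fun i _ j _ hij =>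
    ball_disjoint_ball (by rw [dist_eq_norm]; linarith [hf hij, hρr])
  have hann : ∀ i ∈ S, ball (f i) ρ ⊆ closedBall c x \ ball c y := by
    intro i hi z hz
    rw [mem_ball, dist_eq_norm] at hz
    have h1 := norm_sub_le_norm_sub_add_norm_sub z (f i) c
    have h2 := norm_sub_le_norm_sub_add_norm_sub (f i) z c
    rw [norm_sub_rev (f i) z] at h2
    refine ⟨by rw [mem_closedBall, dist_eq_norm]; linarith [(hS i hi).2], ?_⟩
    rw [mem_ball, dist_eq_norm, not_lt]
    exact max_le (by linarith [(hS i hi).1]) (norm_nonneg _)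
  have hy : 0 ≤ y := le_max_right _ _
  have hyx : y ≤ x := max_le (by linarith) (by positivity)
  have hpack := card_mul_pow_add_pow_le_pow hρ hdisj hy hyx hann
  have hdiff : x ^ n - y ^ n ≤ (x - y) * n * x ^ (n - 1) := by
    have := abs_pow_sub_pow_le x y n
    rwa [abs_of_nonneg (sub_nonneg.2 (pow_le_pow_left₀ hy hyx n)),
      abs_of_nonneg (sub_nonneg.2 hyx), abs_of_nonneg (hy.trans hyx), abs_of_nonneg hy,
      max_eq_left hyx] at this
  have hxy : x - y ≤ 1 + 2 * ρ := by linarith [le_max_left (R - ρ) 0]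
  have hx : x ≤ (1 + ρ) * (R + 1) := by nlinarith
  rw [div_mul_eq_mul_div, le_div_iff₀ (by positivity)]
  calc (#S : ℝ) * ρ ^ n ≤ x ^ n - y ^ n := by linarith
    _ ≤ (x - y) * n * x ^ (n - 1) := hdiff
    _ ≤ (1 + 2 * ρ) * n * ((1 + ρ) * (R + 1)) ^ (n - 1) := by gcongr
    _ = (1 + 2 * ρ) * n * (1 + ρ) ^ (n - 1) * (R + 1) ^ (n - 1) := by rw [mul_pow]; ring


theorem exists_sum_inv_norm_sub_pow_le_div {f : ι → E} {r : ℝ} (hr : 0 < r)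
    (hf : Pairwise fun i j => r ≤ ‖f i - f j‖) :
    ∃ C > 0, ∀ (c : E) (t : ℝ), 1 ≤ t → ∀ T : Finset ι, (∀ i ∈ T, t ≤ ‖f i - c‖) →
      ∑ i ∈ T, (‖f i - c‖ ^ (finrank ℝ E + 1))⁻¹ ≤ C / t := by
  obtain ⟨K, hK, hcount⟩ := exists_card_le_mul_pow_of_mem_shell hr hf
  set n := finrank ℝ E
  have hn : 0 < n := finrank_pos
  refine ⟨2 ^ (n - 1) * K * 2, by positivity, fun c t ht T hT => ?_⟩
  set κ : ι → ℕ := fun i => ⌊‖f i - c‖ - t⌋₊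
  have hshell (i : ι) (hi : i ∈ T) : t + κ i ≤ ‖f i - c‖ ∧ ‖f i - c‖ ≤ t + κ i + 1 := by
    have h0 : 0 ≤ ‖f i - c‖ - t := sub_nonneg.2 (hT i hi)
    constructor
    · linarith [Nat.floor_le h0]
    · linarith [Nat.lt_floor_add_one (‖f i - c‖ - t)]
  have hterm (k : ℕ) : K * (t + k + 1) ^ (n - 1) * ((t + k) ^ (n + 1))⁻¹
      ≤ 2 ^ (n - 1) * K * ((t + k) ^ 2)⁻¹ := by
    have hx : 1 ≤ t + k := le_add_of_le_of_nonneg ht k.cast_nonneg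
    have hsplit : (t + k) ^ (n + 1) = (t + k) ^ (n - 1) * (t + k) ^ 2 := by
      rw [← pow_add]; congr 1; omega
    calc K * (t + k + 1) ^ (n - 1) * ((t + k) ^ (n + 1))⁻¹
        ≤ K * (2 * (t + k)) ^ (n - 1) * ((t + k) ^ (n + 1))⁻¹ := by gcongr; linarith
      _ = 2 ^ (n - 1) * K * ((t + k) ^ 2)⁻¹ := by
        rw [hsplit, mul_pow]; field_simp
  calc ∑ i ∈ T, (‖f i - c‖ ^ (n + 1))⁻¹
      ≤ ∑ k ∈ range (T.sup κ + 1), K * (t + k + 1) ^ (n - 1) * ((t + k) ^ (n + 1))⁻¹ := by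
        refine sum_le_sum_range_mul_of_card_fiber_le
          (fun i hi => Nat.lt_succ_of_le (le_sup hi)) (fun i hi => ?_) (fun k _ => by positivity)
          (fun k _ => hcount c (t + k) (by positivity) _ fun i hi => ?_)
        · have := (hshell i hi).1
          gcongr
        · rw [mem_filter] at hi
          rw [← hi.2]
          exact hshell i hi.1
    _ ≤ ∑ k ∈ range (T.sup κ + 1), 2 ^ (n - 1) * K * ((t + k) ^ 2)⁻¹ :=
        sum_le_sum fun k _ => hterm k
    _ ≤ 2 ^ (n - 1) * K * (2 / t) := by
        rw [← mul_sum]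
        gcongr
        exact sum_range_inv_add_sq_le ht _
    _ = 2 ^ (n - 1) * K * 2 / t := by ring

theorem exists_sum_sum_inv_norm_sub_pow_le_mul_log {f : ι → E} {r : ℝ} (hr : 0 < r)
    (hf : Pairwise fun i j => r ≤ ‖f i - f j‖) :
    ∃ C > 0, ∀ M a : ℝ, 1 ≤ M → 1 ≤ a → ∀ S₁ S₂ : Finset ι,
      (∀ i ∈ S₁, M / 2 ≤ ‖f i‖ ∧ ‖f i‖ ≤ M) → (∀ j ∈ S₂, M + a ≤ ‖f j‖) →
      ∑ i ∈ S₁, ∑ j ∈ S₂, (‖f j - f i‖ ^ (finrank ℝ E + 1))⁻¹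
        ≤ C * M ^ (finrank ℝ E - 1) * Real.log ((a + M / 2) / a) := by
  obtain ⟨K, hK, hcount⟩ := exists_card_le_mul_pow_of_mem_shell hr hf
  obtain ⟨Ct, hCt, htail⟩ := exists_sum_inv_norm_sub_pow_le_div hr hf
  set n := finrank ℝ E
  refine ⟨6 * K * Ct, by positivity, fun M a hM ha S₁ S₂ hS₁ hS₂ => ?_⟩
  set κ : ι → ℕ := fun i => ⌊M - ‖f i‖⌋₊
  set N := ⌊M / 2⌋₊ + 1
  have hκ (i : ι) (hi : i ∈ S₁) : κ i ≤ M - ‖f i‖ := Nat.floor_le (by linarith [hS₁ i hi])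
  have hinner (i : ι) (hi : i ∈ S₁) :
      ∑ j ∈ S₂, (‖f j - f i‖ ^ (n + 1))⁻¹ ≤ Ct / (a + κ i) := by
    refine htail (f i) _ (le_add_of_le_of_nonneg ha (Nat.cast_nonneg _)) S₂ fun j hj => ?_
    linarith [norm_sub_norm_le (f j) (f i), hS₂ j hj, hκ i hi]
  have hκlt (i : ι) : M - ‖f i‖ < κ i + 1 := Nat.lt_floor_add_one _
  have hfiber (k : ℕ) : (#{i ∈ S₁ | κ i = k} : ℝ) ≤ K * M ^ (n - 1) := by
    set R := max (M - k - 1) 0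
    have hRM : R ≤ M - 1 := max_le (by linarith [k.cast_nonneg (α := ℝ)]) (by linarith)
    calc (#{i ∈ S₁ | κ i = k} : ℝ) ≤ K * (R + 1) ^ (n - 1) := by
          refine hcount 0 R (le_max_right _ _) _ fun i hi => ?_
          rw [mem_filter] at hi
          rw [sub_zero]
          have hlt := hκlt i
          have hle := hκ i hi.1
          rw [hi.2] at hlt hle
          exact ⟨max_le (by linarith) (norm_nonneg _), by linarith [le_max_left (M - k - 1) 0]⟩
      _ ≤ K * M ^ (n - 1) := by gcongr; linarith
  have hlog : Real.log ((a + N) / a) ≤ 3 * Real.log ((a + M / 2) / a) := by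
    have hN : (N : ℝ) ≤ M / 2 + 1 := by
      simp only [N, Nat.cast_add, Nat.cast_one]
      linarith [Nat.floor_le (by linarith : 0 ≤ M / 2)]
    rw [show 3 * Real.log ((a + M / 2) / a) = Real.log (((a + M / 2) / a) ^ 3) by
      rw [Real.log_pow]; norm_num]
    apply Real.log_le_log (by positivity)
    rw [div_pow, div_le_div_iff₀ (by positivity) (by positivity)]
    have ha0 : 0 < a := by linarith
    -- `(a + M/2)³ - (a + M/2 + 1) a² = a² (M - 1) + (3/4) a M² + M³/8`
    nlinarith [mul_le_mul_of_nonneg_right hN (pow_nonneg ha0.le 3),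
      mul_nonneg (pow_nonneg ha0.le 3) (by linarith : 0 ≤ M - 1),
      mul_nonneg (pow_nonneg ha0.le 2) (sq_nonneg M),
      mul_nonneg ha0.le (pow_nonneg (by linarith : (0 : ℝ) ≤ M) 3)]
  calc ∑ i ∈ S₁, ∑ j ∈ S₂, (‖f j - f i‖ ^ (n + 1))⁻¹
      ≤ ∑ k ∈ range N, K * M ^ (n - 1) * (Ct / (a + k)) :=
        sum_le_sum_range_mul_of_card_fiber_le
          (fun i hi => Nat.lt_succ_of_le (Nat.floor_le_floor (by linarith [hS₁ i hi])))
          hinner (fun k _ => by positivity) fun k _ => hfiber k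
    _ = K * M ^ (n - 1) * Ct * ∑ k ∈ range N, (a + k)⁻¹ := by
        rw [mul_sum]; simp only [div_eq_mul_inv, mul_assoc]
    _ ≤ K * M ^ (n - 1) * Ct * (2 * (3 * Real.log ((a + M / 2) / a))) := by
        gcongr
        exact (sum_range_inv_add_le_two_mul_log ha N).trans (by linarith)
    _ = 6 * K * Ct * M ^ (n - 1) * Real.log ((a + M / 2) / a) := by ring

end SeparatedFamily

theorem exists_pos_pairwise_le_norm_sub_latticePoint {d : ℕ} {B : Matrix (Fin d) (Fin d) ℝ}
    (hB : IsUnit B.det) :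
    ∃ r > 0, Pairwise fun m m' : Fin d → ℤ => r ≤ ‖latticePoint B m - latticePoint B m'‖ := by
  let L : (Fin d → ℝ) →ₗ[ℝ] EuclideanSpace ℝ (Fin d) :=
    (WithLp.linearEquiv 2 ℝ (Fin d → ℝ)).symm.toLinearMap ∘ₗ B.mulVecLin
  have hL (m : Fin d → ℤ) : latticePoint B m = L fun j => (m j : ℝ) := rfl
  have hinj : Function.Injective L :=
    (WithLp.linearEquiv 2 ℝ (Fin d → ℝ)).symm.injective.comp
      (Matrix.mulVec_injective_iff_isUnit.2 ((Matrix.isUnit_iff_isUnit_det B).2 hB))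
  obtain ⟨K, hK, hanti⟩ := L.injective_iff_antilipschitz.1 hinj
  refine ⟨(K : ℝ)⁻¹, by positivity, fun m m' hmm' => ?_⟩
  obtain ⟨j, hj⟩ := Function.ne_iff.1 hmm'
  have h1 : 1 ≤ dist (fun j => (m j : ℝ)) (fun j => (m' j : ℝ)) :=
    calc (1 : ℝ) ≤ dist (m j) (m' j) := Int.pairwise_one_le_dist hj
      _ = dist (m j : ℝ) (m' j) := (Int.dist_cast_real _ _).symm
      _ ≤ _ := dist_le_pi_dist (fun j => (m j : ℝ)) (fun j => (m' j : ℝ)) j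
  have h2 := hanti.le_mul_dist (fun j => (m j : ℝ)) (fun j => (m' j : ℝ))
  rw [hL, hL, ← dist_eq_norm, inv_le_iff_one_le_mul₀ (by positivity)]
  linarith

/-- For a full-rank lattice `Λ* = B ℤ^d` in `ℝ^d`, `d ≥ 2`, `M > 0` and `a > 1`, the double sum
over lattice points `w'` with `M/2 < ‖w'‖ < M` and `w` with `M + a ≤ ‖w‖ < 2M` of
`‖w - w'‖^{-(d+1)}` is `≤ C · M^{d-1} · log((a + M/2)/a)`, with `C` depending only on the
lattice and `d`. -/
theorem lattice_double_sum_annulus (d : ℕ) (hd : 2 ≤ d)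
    (B : Matrix (Fin d) (Fin d) ℝ) (hB : IsUnit B.det) :
    ∃ C > 0, ∀ M a : ℝ, 0 < M → 1 < a →
      (∑' p : {p : (Fin d → ℤ) × (Fin d → ℤ) //
          (M / 2 < ‖latticePoint B p.1‖ ∧ ‖latticePoint B p.1‖ < M) ∧
          (M + a ≤ ‖latticePoint B p.2‖ ∧ ‖latticePoint B p.2‖ < 2 * M)},
        (‖latticePoint B p.1.2 - latticePoint B p.1.1‖ ^ (d + 1))⁻¹)
      ≤ C * M ^ (d - 1) * Real.log ((a + M / 2) / a) := by
  have : Nontrivial (EuclideanSpace ℝ (Fin d)) :=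
    nontrivial_of_finrank_pos (by rw [finrank_euclideanSpace_fin]; omega)
  obtain ⟨r, hr, hsep⟩ := exists_pos_pairwise_le_norm_sub_latticePoint hB
  obtain ⟨C, hC, hbound⟩ := exists_sum_sum_inv_norm_sub_pow_le_mul_log hr hsep
  rw [finrank_euclideanSpace_fin] at hbound
  refine ⟨C, hC, fun M a hM ha => ?_⟩
  have hRHS : 0 ≤ C * M ^ (d - 1) * Real.log ((a + M / 2) / a) := by
    have : 1 ≤ (a + M / 2) / a := by rw [le_div_iff₀ (by linarith)]; linarith
    have := Real.log_nonneg this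
    positivity
  refine tsum_le_of_sum_le' hRHS fun s => ?_
  rcases s.eq_empty_or_nonempty with rfl | ⟨⟨_, -, hw_lo, hw_hi⟩, -⟩
  · simpa using hRHS
  have hmem (q) (hq : q ∈ s.map (Function.Embedding.subtype _)) :
      (M / 2 ≤ ‖latticePoint B q.1‖ ∧ ‖latticePoint B q.1‖ ≤ M) ∧
        M + a ≤ ‖latticePoint B q.2‖ := by
    obtain ⟨p, -, rfl⟩ := mem_map.1 hq
    exact ⟨⟨p.2.1.1.le, p.2.1.2.le⟩, p.2.2.1⟩
  refine (sum_map s (Function.Embedding.subtype _)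
    fun q => (‖latticePoint B q.2 - latticePoint B q.1‖ ^ (d + 1))⁻¹).symm.trans_le <|
    (sum_le_sum_image_fst_sum_image_snd _ fun _ _ => by positivity).trans <|
    hbound M a (by linarith) ha.le _ _ (fun m hm => ?_) fun m hm => ?_
  · obtain ⟨q, hq, rfl⟩ := mem_image.1 hm
    exact (hmem q hq).1
  · obtain ⟨q, hq, rfl⟩ := mem_image.1 hm
    exact (hmem q hq).2

end
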